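/- (Improvement condition, equations (23)–(25)) Under the federated setup with mutually uncorrelated noises satisfying 𝔼[e⁽ⁱ⁾ (e⁽ʲ⁾)ᵀ] = 0 for i ≠ j and 𝔼[e⁽ⁱ⁾ (e⁽ⁱ⁾)ᵀ] = σᵢ² I, suppose α⁽⁰⁾ ∈ [0,1) and that the dissimilarity terms satisfy Σ_{i=1}^{M-1} (α⁽ⁱ⁾)² ( ‖Δ⁽ⁱ⁾(Δ⁽ⁱ⁾)ᵀ‖₂ + σᵢ² ) + Σ_{i=1}^{M-1} Σ_{j=1, j≠i}^{M-1} α⁽ⁱ⁾ α⁽ʲ⁾ ‖Δ⁽ⁱ⁾(Δ⁽ʲ⁾)ᵀ‖₂ < (1 − (α⁽⁰⁾)²) σ₀². Then the dispersion matrix Ω = 𝔼[(y^fed − ȳ₀)(y^fed − ȳ₀)ᵀ] satisfies ‖Ω‖₂ < σ₀²; i.e., the federated trajectory has strictly smaller dispersion around the noiseless nominal output than the trajectory collected from the nominal system alone (whose dispersion has operator norm σ₀²). -/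

import Mathlib

/-!
Since the weights sum to one, `y^fed − ȳ₀ = Σᵢ α⁽ⁱ⁾ (Δ⁽ⁱ⁾ + e⁽ⁱ⁾)`. The noises are centred and
mutually uncorrelated, so all cross terms between discrepancies and noises, and between distinct
noises, drop out of the second moment:
`Ω = Σᵢⱼ α⁽ⁱ⁾α⁽ʲ⁾ Δ⁽ⁱ⁾(Δ⁽ʲ⁾)ᵀ + Σᵢ (α⁽ⁱ⁾)² σᵢ² I`.
By the triangle inequality (the weights are nonnegative) `‖Ω‖₂` is at most
`Σᵢⱼ α⁽ⁱ⁾α⁽ʲ⁾ ‖Δ⁽ⁱ⁾(Δ⁽ʲ⁾)ᵀ‖₂ + Σᵢ (α⁽ⁱ⁾)² σᵢ²`. As `Δ⁽⁰⁾ = 0`, the only surviving term with an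
index 0 is `(α⁽⁰⁾)² σ₀²`, and the improvement condition says the rest is below `(1 − (α⁽⁰⁾)²) σ₀²`.
-/

open MeasureTheory Finset Filter

/-- The induced 2-norm (operator norm with respect to the Euclidean norm, i.e. the
largest singular value) of a real square matrix. -/
noncomputable def inducedTwoNorm {n : ℕ} (A : Matrix (Fin n) (Fin n) ℝ) : ℝ :=
  ‖Matrix.toEuclideanCLM (𝕜 := ℝ) A‖

section InducedTwoNorm

variable {n : ℕ}

lemma inducedTwoNorm_add_le (A B : Matrix (Fin n) (Fin n) ℝ) :
    inducedTwoNorm (A + B) ≤ inducedTwoNorm A + inducedTwoNorm B := by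
  simpa only [inducedTwoNorm, map_add] using norm_add_le _ _

lemma inducedTwoNorm_smul (c : ℝ) (A : Matrix (Fin n) (Fin n) ℝ) :
    inducedTwoNorm (c • A) = |c| * inducedTwoNorm A := by
  simp only [inducedTwoNorm, map_smul, norm_smul, Real.norm_eq_abs]

lemma inducedTwoNorm_smul_one_le (c : ℝ) :
    inducedTwoNorm (c • (1 : Matrix (Fin n) (Fin n) ℝ)) ≤ |c| := by
  rw [inducedTwoNorm_smul]
  refine mul_le_of_le_one_right (abs_nonneg c) ?_
  rw [inducedTwoNorm, map_one, ContinuousLinearMap.one_def]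
  exact ContinuousLinearMap.norm_id_le

lemma inducedTwoNorm_sum_le {ι : Type*} (s : Finset ι) (A : ι → Matrix (Fin n) (Fin n) ℝ) :
    inducedTwoNorm (∑ i ∈ s, A i) ≤ ∑ i ∈ s, inducedTwoNorm (A i) := by
  simpa only [inducedTwoNorm, map_sum] using norm_sum_le _ _

lemma inducedTwoNorm_sum_smul_le {ι : Type*} (s : Finset ι) {c : ι → ℝ}
    (hc : ∀ i ∈ s, 0 ≤ c i) (A : ι → Matrix (Fin n) (Fin n) ℝ) :
    inducedTwoNorm (∑ i ∈ s, c i • A i) ≤ ∑ i ∈ s, c i * inducedTwoNorm (A i) := by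
  refine (inducedTwoNorm_sum_le s _).trans_eq (sum_congr rfl fun i hi => ?_)
  rw [inducedTwoNorm_smul, abs_of_nonneg (hc i hi)]

lemma inducedTwoNorm_sum_sum_smul_add_sum_smul_smul_one_le {ι : Type*} [Fintype ι] {α : ι → ℝ}
    (hα : ∀ i, 0 ≤ α i) (V : ι → ι → Matrix (Fin n) (Fin n) ℝ) (σ : ι → ℝ) :
    inducedTwoNorm (∑ i, ∑ j, (α i * α j) • V i j + ∑ i, α i ^ 2 • (σ i ^ 2 • 1))
      ≤ ∑ i, ∑ j, α i * α j * inducedTwoNorm (V i j) + ∑ i, α i ^ 2 * σ i ^ 2 := by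
  refine (inducedTwoNorm_add_le _ _).trans (add_le_add ?_ ?_)
  · exact (inducedTwoNorm_sum_le _ _).trans <| sum_le_sum fun i _ =>
      inducedTwoNorm_sum_smul_le _ (fun j _ => mul_nonneg (hα i) (hα j)) _
  · refine (inducedTwoNorm_sum_smul_le _ (fun i _ => sq_nonneg (α i)) _).trans <|
      sum_le_sum fun i _ => mul_le_mul_of_nonneg_left ?_ (sq_nonneg (α i))
    exact (inducedTwoNorm_smul_one_le _).trans_eq (abs_of_nonneg (sq_nonneg (σ i)))

end InducedTwoNorm

lemma sum_smul_add_sub_of_sum_eq_one {ι R E : Type*} [Ring R] [AddCommGroup E] [Module R E]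
    {s : Finset ι} {α : ι → R} (hα : ∑ i ∈ s, α i = 1) (x : E) (v : ι → E) :
    ∑ i ∈ s, α i • (x + v i) - x = ∑ i ∈ s, α i • v i := by
  rw [sum_congr rfl fun i _ => smul_add (α i) x (v i), sum_add_distrib, ← sum_smul, hα, one_smul,
    add_sub_cancel_left]

lemma sum_sum_eq_sum_add_sum_sum_erase {ι M : Type*} [DecidableEq ι] [AddCommMonoid M]
    (s : Finset ι) (f : ι → ι → M) :
    ∑ i ∈ s, ∑ j ∈ s, f i j = ∑ i ∈ s, f i i + ∑ i ∈ s, ∑ j ∈ s.erase i, f i j := by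
  rw [← sum_add_distrib]
  exact sum_congr rfl fun i hi => (add_sum_erase s (f i) hi).symm

lemma sum_sum_eq_sum_sum_erase_of_eq_zero {ι M : Type*} [Fintype ι] [DecidableEq ι]
    [AddCommMonoid M] (f : ι → ι → M) (i₀ : ι) (hrow : ∀ j, f i₀ j = 0) (hcol : ∀ i, f i i₀ = 0) :
    ∑ i, ∑ j, f i j = ∑ i ∈ univ.erase i₀, ∑ j ∈ univ.erase i₀, f i j := by
  rw [← sum_erase (f := fun i => ∑ j, f i j) univ (sum_eq_zero fun j _ => hrow j)]
  exact sum_congr rfl fun i _ => (sum_erase (f := f i) univ (hcol i)).symm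

section CrossMoment

variable {Ω : Type*} [MeasurableSpace Ω] {μ : Measure Ω}

lemma integrable_const_add_mul_const_add [IsFiniteMeasure μ] {X Y : Ω → ℝ} (u v : ℝ)
    (hX : Integrable X μ) (hY : Integrable Y μ) (hXY : Integrable (fun ω => X ω * Y ω) μ) :
    Integrable (fun ω => (u + X ω) * (v + Y ω)) μ := by
  simp only [add_mul, mul_add, add_assoc]
  exact (integrable_const _).add ((hX.mul_const v).add ((hY.const_mul u).add hXY))

lemma integral_const_add_mul_const_add [IsProbabilityMeasure μ] {X Y : Ω → ℝ} (u v : ℝ)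
    (hX : Integrable X μ) (hY : Integrable Y μ) (hXY : Integrable (fun ω => X ω * Y ω) μ)
    (hX₀ : ∫ ω, X ω ∂μ = 0) (hY₀ : ∫ ω, Y ω ∂μ = 0) :
    ∫ ω, (u + X ω) * (v + Y ω) ∂μ = u * v + ∫ ω, X ω * Y ω ∂μ := by
  have hYXY : Integrable (fun ω => u * Y ω + X ω * Y ω) μ := (hY.const_mul u).add hXY
  have hXYXY : Integrable (fun ω => X ω * v + (u * Y ω + X ω * Y ω)) μ :=
    (hX.mul_const v).add hYXY
  simp only [add_mul, mul_add, add_assoc]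
  rw [integral_add (integrable_const _) hXYXY, integral_add (hX.mul_const v) hYXY,
    integral_add (hY.const_mul u) hXY,
    integral_mul_const v X, integral_const_mul u Y, hX₀, hY₀]
  simp

noncomputable def crossMoment {κ κ' : Type*} (μ : Measure Ω) (X : Ω → κ → ℝ) (Y : Ω → κ' → ℝ) :
    Matrix κ κ' ℝ :=
  Matrix.of fun a b => ∫ ω, X ω a * Y ω b ∂μ

variable {κ κ' : Type*}

lemma crossMoment_sum_smul_sum_smul {ι : Type*} [Fintype ι] (α : ι → ℝ)
    (X : ι → Ω → κ → ℝ) (Y : ι → Ω → κ' → ℝ)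
    (hXY : ∀ i j a b, Integrable (fun ω => X i ω a * Y j ω b) μ) :
    crossMoment μ (fun ω => ∑ i, α i • X i ω) (fun ω => ∑ j, α j • Y j ω)
      = ∑ i, ∑ j, (α i * α j) • crossMoment μ (X i) (Y j) := by
  ext a b
  have hterm : ∀ i j, (fun ω => α i * X i ω a * (α j * Y j ω b))
      = fun ω => α i * α j * (X i ω a * Y j ω b) := fun i j => by funext ω; ring
  have hint : ∀ i j, Integrable (fun ω => α i * X i ω a * (α j * Y j ω b)) μ :=
    fun i j => hterm i j ▸ (hXY i j a b).const_mul _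
  simp only [crossMoment, Matrix.of_apply, Matrix.sum_apply, Matrix.smul_apply, smul_eq_mul,
    Finset.sum_apply, Pi.smul_apply, sum_mul_sum]
  rw [integral_finsetSum _ fun i _ => integrable_finsetSum _ fun j _ => hint i j]
  refine sum_congr rfl fun i _ => ?_
  rw [integral_finsetSum _ fun j _ => hint i j]
  exact sum_congr rfl fun j _ => by rw [hterm, integral_const_mul]

lemma crossMoment_const_add [IsProbabilityMeasure μ] (u : κ → ℝ) (v : κ' → ℝ)
    {X : Ω → κ → ℝ} {Y : Ω → κ' → ℝ}
    (hX : ∀ a, Integrable (X · a) μ) (hY : ∀ b, Integrable (Y · b) μ)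
    (hXY : ∀ a b, Integrable (fun ω => X ω a * Y ω b) μ)
    (hX₀ : ∀ a, ∫ ω, X ω a ∂μ = 0) (hY₀ : ∀ b, ∫ ω, Y ω b ∂μ = 0) :
    crossMoment μ (fun ω => u + X ω) (fun ω => v + Y ω)
      = Matrix.vecMulVec u v + crossMoment μ X Y := by
  ext a b
  exact integral_const_add_mul_const_add _ _ (hX a) (hY b) (hXY a b) (hX₀ a) (hY₀ b)

lemma crossMoment_sum_smul_const_add_of_uncorrelated [IsProbabilityMeasure μ] {ι : Type*}
    [Fintype ι] [DecidableEq ι] (α : ι → ℝ) (Δ : ι → κ → ℝ) (e : ι → Ω → κ → ℝ)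
    (C : ι → Matrix κ κ ℝ) (he_int : ∀ i a, Integrable (e i · a) μ)
    (he_mean : ∀ i a, ∫ ω, e i ω a ∂μ = 0)
    (hout_int : ∀ i j a b, Integrable (fun ω => e i ω a * e j ω b) μ)
    (hcov : ∀ i j, crossMoment μ (e i) (e j) = if i = j then C i else 0) :
    crossMoment μ (fun ω => ∑ i, α i • (Δ i + e i ω)) (fun ω => ∑ i, α i • (Δ i + e i ω))
      = ∑ i, ∑ j, (α i * α j) • Matrix.vecMulVec (Δ i) (Δ j) + ∑ i, α i ^ 2 • C i := by
  rw [crossMoment_sum_smul_sum_smul α (fun i ω => Δ i + e i ω) (fun i ω => Δ i + e i ω)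
    fun i j a b => integrable_const_add_mul_const_add _ _ (he_int i a) (he_int j b)
      (hout_int i j a b)]
  simp only [crossMoment_const_add (Δ _) (Δ _) (he_int _) (he_int _) (hout_int _ _) (he_mean _)
    (he_mean _), hcov, smul_add, sum_add_distrib, smul_ite, smul_zero, sum_ite_eq, mem_univ,
    if_true, sq]

end CrossMoment

theorem federated_dispersion_improvement_general
    {n M : ℕ} (hM : 1 ≤ M)
    {Ω : Type*} [MeasurableSpace Ω] (μ : Measure Ω) [IsProbabilityMeasure μ]
    -- noiseless nominal output trajectory
    (ybar : Fin n → ℝ)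
    -- deterministic discrepancy vectors, with zero discrepancy for the nominal system
    (Δ : Fin M → Fin n → ℝ) (hΔ0 : Δ ⟨0, hM⟩ = 0)
    -- weights in [0,1] summing to one, with α⁽⁰⁾ ∈ [0,1)
    (α : Fin M → ℝ) (hα0 : ∀ i, 0 ≤ α i)
    (hαsum : ∑ i, α i = 1)
    -- noise standard deviations
    (σ : Fin M → ℝ)
    -- zero-mean integrable measurement noises
    (e : Fin M → Ω → Fin n → ℝ)
    (he_int : ∀ i, Integrable (e i) μ)
    (he_mean : ∀ i, ∫ ω, e i ω ∂μ = 0)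
    -- entrywise integrability of all noise outer products
    (hout_int : ∀ i j : Fin M, ∀ a b : Fin n,
      Integrable (fun ω => e i ω a * e j ω b) μ)
    -- mutually uncorrelated noises: 𝔼[e⁽ⁱ⁾ (e⁽ʲ⁾)ᵀ] = 0 for i ≠ j
    (he_cross : ∀ i j : Fin M, i ≠ j → ∀ a b : Fin n,
      ∫ ω, e i ω a * e j ω b ∂μ = 0)
    -- isotropic covariances: 𝔼[e⁽ⁱ⁾ (e⁽ⁱ⁾)ᵀ] = σᵢ² I
    (he_cov : ∀ i : Fin M, ∀ a b : Fin n,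
      ∫ ω, e i ω a * e i ω b ∂μ = (σ i ^ 2 • (1 : Matrix (Fin n) (Fin n) ℝ)) a b)
    -- measured trajectories and the federated trajectory
    (y : Fin M → Ω → Fin n → ℝ)
    (hy : ∀ i ω, y i ω = ybar + Δ i + e i ω)
    (yfed : Ω → Fin n → ℝ)
    (hyfed : ∀ ω, yfed ω = ∑ i, α i • y i ω)
    -- the dispersion matrix, defined entrywise
    (Ωdisp : Matrix (Fin n) (Fin n) ℝ)
    (hΩdisp : ∀ a b : Fin n,
      Ωdisp a b = ∫ ω, (yfed ω a - ybar a) * (yfed ω b - ybar b) ∂μ)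
    -- the improvement condition on the dissimilarity terms
    (himprove :
      ∑ i ∈ Finset.univ.erase ⟨0, hM⟩,
          (α i) ^ 2 * (inducedTwoNorm (Matrix.vecMulVec (Δ i) (Δ i)) + σ i ^ 2)
        + ∑ i ∈ Finset.univ.erase ⟨0, hM⟩,
            ∑ j ∈ (Finset.univ.erase (⟨0, hM⟩ : Fin M)).erase i,
              α i * α j * inducedTwoNorm (Matrix.vecMulVec (Δ i) (Δ j))
      < (1 - (α ⟨0, hM⟩) ^ 2) * σ ⟨0, hM⟩ ^ 2) :
    inducedTwoNorm Ωdisp < σ ⟨0, hM⟩ ^ 2 := by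
  set i₀ : Fin M := ⟨0, hM⟩
  have hcentered : (fun ω => yfed ω - ybar) = fun ω => ∑ i, α i • (Δ i + e i ω) := by
    funext ω
    simp only [hyfed, hy, add_assoc]
    exact sum_smul_add_sub_of_sum_eq_one hαsum _ _
  have hΩ : Ωdisp = ∑ i, ∑ j, (α i * α j) • Matrix.vecMulVec (Δ i) (Δ j)
      + ∑ i, α i ^ 2 • (σ i ^ 2 • (1 : Matrix (Fin n) (Fin n) ℝ)) := by
    rw [show Ωdisp = crossMoment μ (fun ω => yfed ω - ybar) (fun ω => yfed ω - ybar) from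
      Matrix.ext hΩdisp, hcentered]
    refine crossMoment_sum_smul_const_add_of_uncorrelated α Δ e _ (fun i => (he_int i).eval)
      (fun i a => by rw [← eval_integral (he_int i).eval, he_mean i, Pi.zero_apply]) hout_int
      fun i j => ?_
    ext a b
    split_ifs with hij
    · exact hij ▸ he_cov i a b
    · exact he_cross i j hij a b
  have hbound := inducedTwoNorm_sum_sum_smul_add_sum_smul_smul_one_le hα0
    (fun i j => Matrix.vecMulVec (Δ i) (Δ j)) σ
  rw [← hΩ, sum_sum_eq_sum_sum_erase_of_eq_zero _ i₀ (by simp [hΔ0, inducedTwoNorm])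
    (by simp [hΔ0, inducedTwoNorm]), sum_sum_eq_sum_add_sum_sum_erase,
    ← add_sum_erase _ _ (mem_univ i₀)] at hbound
  simp only [← sq] at hbound
  simp only [mul_add, sum_add_distrib] at himprove
  linarith

/-- **Improvement condition (equations (23)–(25) of the paper).** Under the federated
setup with mutually uncorrelated noises having isotropic covariances `σᵢ² I`, if
`α⁽⁰⁾ < 1` and the dissimilarity terms satisfy the strict inequality
`Σᵢ (α⁽ⁱ⁾)² (‖Δ⁽ⁱ⁾(Δ⁽ⁱ⁾)ᵀ‖₂ + σᵢ²) + Σᵢ Σ_{j≠i} α⁽ⁱ⁾α⁽ʲ⁾ ‖Δ⁽ⁱ⁾(Δ⁽ʲ⁾)ᵀ‖₂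
  < (1 − (α⁽⁰⁾)²) σ₀²`,
then the dispersion matrix of the federated trajectory has induced 2-norm strictly
smaller than `σ₀²`, the dispersion attained using the nominal system alone. -/
theorem federated_dispersion_improvement
    {n M : ℕ} (hM : 1 ≤ M)
    {Ω : Type*} [MeasurableSpace Ω] (μ : Measure Ω) [IsProbabilityMeasure μ]
    -- noiseless nominal output trajectory
    (ybar : Fin n → ℝ)
    -- deterministic discrepancy vectors, with zero discrepancy for the nominal system
    (Δ : Fin M → Fin n → ℝ) (hΔ0 : Δ ⟨0, hM⟩ = 0)
    -- weights in [0,1] summing to one, with α⁽⁰⁾ ∈ [0,1)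
    (α : Fin M → ℝ) (hα0 : ∀ i, 0 ≤ α i) (hα1 : ∀ i, α i ≤ 1)
    (hαsum : ∑ i, α i = 1)
    (hα0lt : α ⟨0, hM⟩ < 1)
    -- noise standard deviations
    (σ : Fin M → ℝ) (hσ0 : ∀ i, 0 ≤ σ i)
    -- zero-mean integrable measurement noises
    (e : Fin M → Ω → Fin n → ℝ)
    (he_int : ∀ i, Integrable (e i) μ)
    (he_mean : ∀ i, ∫ ω, e i ω ∂μ = 0)
    -- entrywise integrability of all noise outer products
    (hout_int : ∀ i j : Fin M, ∀ a b : Fin n,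
      Integrable (fun ω => e i ω a * e j ω b) μ)
    -- mutually uncorrelated noises: 𝔼[e⁽ⁱ⁾ (e⁽ʲ⁾)ᵀ] = 0 for i ≠ j
    (he_cross : ∀ i j : Fin M, i ≠ j → ∀ a b : Fin n,
      ∫ ω, e i ω a * e j ω b ∂μ = 0)
    -- isotropic covariances: 𝔼[e⁽ⁱ⁾ (e⁽ⁱ⁾)ᵀ] = σᵢ² I
    (he_cov : ∀ i : Fin M, ∀ a b : Fin n,
      ∫ ω, e i ω a * e i ω b ∂μ = (σ i ^ 2 • (1 : Matrix (Fin n) (Fin n) ℝ)) a b)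
    -- measured trajectories and the federated trajectory
    (y : Fin M → Ω → Fin n → ℝ)
    (hy : ∀ i ω, y i ω = ybar + Δ i + e i ω)
    (yfed : Ω → Fin n → ℝ)
    (hyfed : ∀ ω, yfed ω = ∑ i, α i • y i ω)
    -- the dispersion matrix, defined entrywise
    (Ωdisp : Matrix (Fin n) (Fin n) ℝ)
    (hΩdisp : ∀ a b : Fin n,
      Ωdisp a b = ∫ ω, (yfed ω a - ybar a) * (yfed ω b - ybar b) ∂μ)
    -- the improvement condition on the dissimilarity terms
    (himprove :
      ∑ i ∈ Finset.univ.erase ⟨0, hM⟩,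
          (α i) ^ 2 * (inducedTwoNorm (Matrix.vecMulVec (Δ i) (Δ i)) + σ i ^ 2)
        + ∑ i ∈ Finset.univ.erase ⟨0, hM⟩,
            ∑ j ∈ (Finset.univ.erase (⟨0, hM⟩ : Fin M)).erase i,
              α i * α j * inducedTwoNorm (Matrix.vecMulVec (Δ i) (Δ j))
      < (1 - (α ⟨0, hM⟩) ^ 2) * σ ⟨0, hM⟩ ^ 2) :
    inducedTwoNorm Ωdisp < σ ⟨0, hM⟩ ^ 2 :=
  federated_dispersion_improvement_general hM μ ybar Δ hΔ0 α hα0 hαsum σ e he_int he_mean hout_int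
    he_cross he_cov y hy yfed hyfed Ωdisp hΩdisp himprove
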